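/- arXiv:2204.02882 — 4 statements merged into one kernel-verified Lean document; each statement's English description precedes it below -/
import Mathlib

section
/- Let X be a continuum (compact connected metric space) and K a subcontinuum of X. If K is not ample, then there exists a nowhere dense subcontinuum of X that intersects both K and the complement X \ K. -/
open Set Topology

/-- The meager composant of `x`: the union of all nowhere dense subcontinua containing `x`. -/
def MeagerComposant (X : Type) [TopologicalSpace X] (x : X) : Set X :=
  ⋃₀ {L : Set X | IsCompact L ∧ IsConnected L ∧ IsNowhereDense L ∧ x ∈ L}

/-- A continuum is hereditarily unicoherent if the intersection of any two subcontinua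
is connected (possibly empty, hence preconnected). -/
def HereditarilyUnicoherent (X : Type) [TopologicalSpace X] : Prop :=
  ∀ A B : Set X, IsCompact A → IsConnected A → IsCompact B → IsConnected B →
    IsPreconnected (A ∩ B)

/-- A subcontinuum `A` of `X` is ample if every open neighborhood of `A` contains a
subcontinuum having `A` in its interior. -/
def Ample {X : Type} [TopologicalSpace X] (A : Set X) : Prop :=
  ∀ U : Set X, IsOpen U → A ⊆ U →
    ∃ K : Set X, IsCompact K ∧ IsPreconnected K ∧ A ⊆ interior K ∧ K ⊆ U

/-- A set `C` is indecomposable if it is not the union of two proper subcontinua. -/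
def IndecomposableSet {X : Type} [TopologicalSpace X] (C : Set X) : Prop :=
  ¬ ∃ H K : Set X, IsCompact H ∧ IsConnected H ∧ IsCompact K ∧ IsConnected K ∧
    H ⊆ C ∧ K ⊆ C ∧ H ≠ C ∧ K ≠ C ∧ H ∪ K = C

/-!
Choose an open `V` with `K ⊆ V` and `closure V ⊆ U`, where `U` witnesses that `K` is not ample,
and let `W` be the component of `closure V` containing `K`. Since `W ⊆ U`, some `x ∈ K` is not
interior to `W`. The component `F` of `x` in `closure V ∩ closure Wᶜ` lies in `W`, hence in the
frontier of `W`, so it is nowhere dense. Points `y ∈ V \ W` accumulate at `x`, and by boundary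
bumping their components in `closure V`, which lie in `closure V ∩ closure Wᶜ`, leave `V`. As
components of a compact Hausdorff space are intersections of clopen sets, `F` leaves `V` as well.
-/

section Components

variable {X : Type*} [TopologicalSpace X]

protected theorem IsClosed.connectedComponentIn {F : Set X} (hF : IsClosed F) (x : X) :
    IsClosed (connectedComponentIn F x) := by
  by_cases hx : x ∈ F
  · refine closure_subset_iff_isClosed.mp ?_
    exact isPreconnected_connectedComponentIn.closure.subset_connectedComponentIn
      (subset_closure (mem_connectedComponentIn hx))
      (closure_minimal (connectedComponentIn_subset F x) hF)
  · rw [connectedComponentIn_eq_empty hx]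
    exact isClosed_empty

theorem disjoint_connectedComponentIn_of_notMem {F : Set X} {x y : X}
    (h : y ∉ connectedComponentIn F x) :
    Disjoint (connectedComponentIn F y) (connectedComponentIn F x) := by
  refine Set.disjoint_left.mpr fun w hwy hwx => h ?_
  have hyF : y ∈ F := connectedComponentIn_nonempty_iff.mp ⟨w, hwy⟩
  rw [connectedComponentIn_eq hwx, ← connectedComponentIn_eq hwy]
  exact mem_connectedComponentIn hyF

theorem IsPreconnected.subset_of_isClosed_inter {s A O : Set X} (hs : IsPreconnected s)
    (hO : IsOpen O) (hOA : IsClosed (O ∩ A)) (hsA : s ⊆ A) (hsO : (s ∩ O).Nonempty) :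
    s ⊆ O := by
  have hcover : s ⊆ O ∪ (O ∩ A)ᶜ := fun y _ => (em (y ∈ O)).imp id fun hy h => hy h.1
  have hdisj : s ∩ (O ∩ (O ∩ A)ᶜ) = ∅ :=
    eq_empty_iff_forall_notMem.mpr fun y hy => hy.2.2 ⟨hy.2.1, hsA hy.1⟩
  refine ((isPreconnected_iff_subset_of_disjoint.mp hs) _ _ hO hOA.isOpen_compl hcover
    hdisj).resolve_right fun hsc => ?_
  obtain ⟨y, hys, hyO⟩ := hsO
  exact hsc hys ⟨hyO, hsA hys⟩

variable [T2Space X] [CompactSpace X]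

theorem exists_isClopen_subset_of_connectedComponent_subset {x : X} {U : Set X} (hU : IsOpen U)
    (h : connectedComponent x ⊆ U) : ∃ Z, IsClopen Z ∧ x ∈ Z ∧ Z ⊆ U := by
  obtain ⟨t, ht⟩ := hU.isClosed_compl.isCompact.elim_finite_subfamily_closed
    (fun Z : {Z : Set X // IsClopen Z ∧ x ∈ Z} => (Z : Set X)) (fun Z => Z.2.1.1)
    (by rwa [← connectedComponent_eq_iInter_isClopen, ← disjoint_iff_inter_eq_empty,
      disjoint_compl_left_iff_subset])
  refine ⟨⋂ Z ∈ t, (Z : Set X), isClopen_biInter_finset fun Z _ => Z.2.1,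
    mem_iInter₂.mpr fun Z _ => Z.2.2, ?_⟩
  rwa [← disjoint_compl_left_iff_subset, disjoint_iff_inter_eq_empty]

theorem IsClosed.exists_isOpen_isClosed_inter_subset {A V : Set X} {x : X} (hA : IsClosed A)
    (hV : IsOpen V) (hx : x ∈ A) (h : connectedComponentIn A x ⊆ V) :
    ∃ O, IsOpen O ∧ x ∈ O ∧ IsClosed (O ∩ A) ∧ O ∩ A ⊆ V := by
  have : CompactSpace A := isCompact_iff_compactSpace.mp hA.isCompact
  rw [connectedComponentIn_eq_image hx, image_subset_iff] at h
  obtain ⟨Z, hZ, hxZ, hZV⟩ :=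
    exists_isClopen_subset_of_connectedComponent_subset (hV.preimage continuous_subtype_val) h
  obtain ⟨O, hO, rfl⟩ := isOpen_induced_iff.mp hZ.isOpen
  refine ⟨O, hO, hxZ, ?_, fun y hy => @hZV ⟨y, hy.2⟩ hy.1⟩
  rw [inter_comm, ← Subtype.image_preimage_coe]
  exact (hZ.isClosed.isCompact.image continuous_subtype_val).isClosed

variable [ConnectedSpace X]

theorem connectedComponentIn_closure_not_subset {V : Set X} {z : X} (hV : IsOpen V)
    (hVne : V ≠ univ) (hz : z ∈ closure V) : ¬ connectedComponentIn (closure V) z ⊆ V := by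
  intro hzV
  obtain ⟨O, hO, hzO, hOc, hOV⟩ :=
    isClosed_closure.exists_isOpen_isClosed_inter_subset hV hz hzV
  have hOV' : O ∩ closure V = O ∩ V :=
    subset_antisymm (subset_inter inter_subset_left hOV) (inter_subset_inter_right _ subset_closure)
  have hclopen : IsClopen (O ∩ closure V) := ⟨hOc, hOV' ▸ hO.inter hV⟩
  exact hVne (eq_univ_of_univ_subset ((hclopen.eq_univ ⟨z, hzO, hz⟩).ge.trans hOV))

theorem connectedComponentIn_not_subset_of_mem_closure {V A : Set X} {x : X} (hV : IsOpen V)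
    (hVne : V ≠ univ) (hA : IsClosed A)
    (hx : x ∈ closure {y ∈ V | connectedComponentIn (closure V) y ⊆ A}) :
    ¬ connectedComponentIn A x ⊆ V := by
  have hxA : x ∈ A :=
    closure_minimal (fun y hy => hy.2 (mem_connectedComponentIn (subset_closure hy.1))) hA hx
  intro hxV
  obtain ⟨O, hO, hxO, hOA, hOAV⟩ := hA.exists_isOpen_isClosed_inter_subset hV hxA hxV
  obtain ⟨y, hyO, hyV, hyA⟩ := mem_closure_iff.mp hx O hO hxO
  have hyO' : connectedComponentIn (closure V) y ⊆ O :=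
    isPreconnected_connectedComponentIn.subset_of_isClosed_inter hO hOA hyA
      ⟨y, mem_connectedComponentIn (subset_closure hyV), hyO⟩
  exact connectedComponentIn_closure_not_subset hV hVne (subset_closure hyV)
    fun z hz => hOAV ⟨hyO' hz, hyA hz⟩

theorem exists_isNowhereDense_of_notMem_interior_connectedComponentIn {V : Set X} {x : X}
    (hV : IsOpen V) (hVne : V ≠ univ) (hxV : x ∈ V)
    (hx : x ∉ interior (connectedComponentIn (closure V) x)) :
    ∃ L, IsCompact L ∧ IsConnected L ∧ IsNowhereDense L ∧ x ∈ L ∧ ¬ L ⊆ V := by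
  set W := connectedComponentIn (closure V) x
  have hWc : IsClosed W := isClosed_closure.connectedComponentIn x
  have hA : IsClosed (closure V ∩ closure Wᶜ) := isClosed_closure.inter isClosed_closure
  set F := connectedComponentIn (closure V ∩ closure Wᶜ) x
  have hxF : x ∈ F := mem_connectedComponentIn ⟨subset_closure hxV, by rwa [closure_compl]⟩
  have hFW : F ⊆ W := isPreconnected_connectedComponentIn.subset_connectedComponentIn hxF
    ((connectedComponentIn_subset _ _).trans inter_subset_left)
  have hFnd : IsNowhereDense F := by
    refine ((isClosed_frontier.isNowhereDense_iff).mpr (interior_frontier hWc)).mono fun y hy => ?_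
    rw [frontier_eq_closure_inter_closure, hWc.closure_eq]
    exact ⟨hFW hy, (connectedComponentIn_subset _ _ hy).2⟩
  have hFV : ¬ F ⊆ V := by
    refine connectedComponentIn_not_subset_of_mem_closure hV hVne hA
      (closure_mono ?_ (hV.inter_closure (t := Wᶜ) ⟨hxV, ?_⟩))
    · exact fun y hy => ⟨hy.1, fun z hz => ⟨connectedComponentIn_subset _ _ hz,
        subset_closure ((disjoint_connectedComponentIn_of_notMem hy.2).subset_compl_right hz)⟩⟩
    · rwa [closure_compl]
  exact ⟨F, (hA.connectedComponentIn x).isCompact,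
    ⟨⟨x, hxF⟩, isPreconnected_connectedComponentIn⟩, hFnd, hxF, hFV⟩

end Components

theorem not_ample_exists_nowhereDense_meeting_general (X : Type) [MetricSpace X] [CompactSpace X] [ConnectedSpace X]
    (K : Set X) (hKc : IsCompact K) (hKconn : IsConnected K) (hK : ¬ Ample K) :
    ∃ L : Set X, IsCompact L ∧ IsConnected L ∧ IsNowhereDense L ∧
      (L ∩ K).Nonempty ∧ (L ∩ Kᶜ).Nonempty := by
  obtain ⟨U, hU, hKU, hnot⟩ : ∃ U, IsOpen U ∧ K ⊆ U ∧ ∀ L : Set X, IsCompact L →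
      IsPreconnected L → K ⊆ interior L → ¬ L ⊆ U := by
    simpa [Ample] using hK
  obtain ⟨V, hV, hKV, hVU⟩ := normal_exists_closure_subset hKc.isClosed hU hKU
  have hVne : V ≠ univ := fun h =>
    hnot univ isCompact_univ isPreconnected_univ (by simp) (by simpa [h] using hVU)
  obtain ⟨k, hk⟩ := hKconn.nonempty
  have hKW : K ⊆ connectedComponentIn (closure V) k :=
    hKconn.isPreconnected.subset_connectedComponentIn hk (hKV.trans subset_closure)
  obtain ⟨x, hxK, hxW⟩ := not_subset.mp fun h =>
    hnot _ (isClosed_closure.connectedComponentIn k).isCompact isPreconnected_connectedComponentIn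
      h ((connectedComponentIn_subset _ _).trans hVU)
  rw [connectedComponentIn_eq (hKW hxK)] at hxW
  obtain ⟨L, hLc, hLconn, hLnd, hxL, hLV⟩ :=
    exists_isNowhereDense_of_notMem_interior_connectedComponentIn hV hVne (hKV hxK) hxW
  obtain ⟨a, haL, haV⟩ := not_subset.mp hLV
  exact ⟨L, hLc, hLconn, hLnd, ⟨x, hxL, hxK⟩, ⟨a, haL, fun haK => haV (hKV haK)⟩⟩

/-- If a subcontinuum `K` of a continuum `X` is not ample, then some nowhere dense
subcontinuum of `X` meets both `K` and `X \\ K`. -/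
theorem not_ample_exists_nowhereDense_meeting (X : Type) [MetricSpace X] [CompactSpace X] [ConnectedSpace X] [Nonempty X]
    (K : Set X) (hKc : IsCompact K) (hKconn : IsConnected K) (hK : ¬ Ample K) :
    ∃ L : Set X, IsCompact L ∧ IsConnected L ∧ IsNowhereDense L ∧
      (L ∩ K).Nonempty ∧ (L ∩ Kᶜ).Nonempty :=
  not_ample_exists_nowhereDense_meeting_general X K hKc hKconn hK
end

section
/- Let X be a hereditarily unicoherent continuum and M_x the meager composant of a point x in X. If K is a subcontinuum of X such that M_x ∩ K is dense in K, then every ample subcontinuum of K intersects M_x. -/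
/-! If `A` has interior, density of `M_x ∩ K` already puts a point of `M_x` in `A`. Otherwise
ampleness yields, for each `n`, a subcontinuum `C_n ⊇ A` of `K` within `1/(n+1)` of `A` that meets
`M_x`, hence a nowhere dense continuum `L_n ∋ x` meeting `C_n`. By hereditary unicoherence
`⋂ₙ (L_n ∪ C_n)` is a continuum containing `x` and `A`. It is nowhere dense: an open subset of it
avoiding `A` (which exists since `A` is nowhere dense) lies in `L_n` for large `n`. So `A ⊆ M_x`. -/

open Set Topology

/-- `A` is an ample subcontinuum of `K` (relative to the subspace topology of `K`):
every relatively open neighborhood of `A` in `K` contains a subcontinuum of `K` whose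
relative interior in `K` contains `A`. -/
def AmpleIn {X : Type} [TopologicalSpace X] (K A : Set X) : Prop :=
  A ⊆ K ∧ ∀ U : Set X, IsOpen U → A ⊆ U →
    ∃ C : Set X, C ⊆ K ∧ IsCompact C ∧ IsPreconnected C ∧ C ⊆ U ∧
      A ⊆ {y : X | ∃ V : Set X, IsOpen V ∧ y ∈ V ∧ V ∩ K ⊆ C}

theorem IsPreconnected.iInter_of_directed {X ι : Type*} [TopologicalSpace X] [T2Space X]
    [Nonempty ι] {V : ι → Set X} (hd : Directed (· ⊇ ·) V) (hc : ∀ i, IsCompact (V i))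
    (hp : ∀ i, IsPreconnected (V i)) : IsPreconnected (⋂ i, V i) := by
  have hcl : IsClosed (⋂ i, V i) := isClosed_iInter fun i => (hc i).isClosed
  have hcpt : IsCompact (⋂ i, V i) :=
    (hc (Classical.arbitrary ι)).of_isClosed_subset hcl (iInter_subset _ _)
  rw [isPreconnected_iff_subset_of_fully_disjoint_closed hcl]
  intro u v hu hv hsuv huv
  obtain ⟨U, U', hU, hU', huU, hvU', hUU'⟩ := SeparatedNhds.of_isCompact_isCompact
    (hcpt.inter_left hu) (hcpt.inter_left hv) (huv.mono inter_subset_left inter_subset_left)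
  have hsU : ⋂ i, V i ⊆ U ∪ U' := fun z hz =>
    (hsuv hz).imp (fun hzu => huU ⟨hzu, hz⟩) (fun hzv => hvU' ⟨hzv, hz⟩)
  obtain ⟨i, hi⟩ := exists_subset_nhds_of_isCompact hd hc fun z hz =>
    (hU.union hU').mem_nhds (hsU hz)
  have hsV : ⋂ i, V i ⊆ V i := iInter_subset _ i
  rcases (hp i).subset_or_subset hU hU' hUU' hi with h | h
  · exact Or.inl fun z hz => (hsuv hz).resolve_right fun hzv =>
      hUU'.notMem_of_mem_left (h (hsV hz)) (hvU' ⟨hzv, hz⟩)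
  · exact Or.inr fun z hz => (hsuv hz).resolve_left fun hzu =>
      hUU'.notMem_of_mem_left (huU ⟨hzu, hz⟩) (h (hsV hz))

namespace HereditarilyUnicoherent

variable {X : Type} [TopologicalSpace X] [T2Space X] (hX : HereditarilyUnicoherent X)
  {T : ℕ → Set X} (hTc : ∀ n, IsCompact (T n)) (hTconn : ∀ n, IsConnected (T n))
  {x : X} (hx : ∀ n, x ∈ T n)
include hX hTc hTconn hx

theorem isConnected_dissipate (n : ℕ) :
    IsCompact (dissipate T n) ∧ IsConnected (dissipate T n) := by
  induction n with
  | zero => simpa using ⟨hTc 0, hTconn 0⟩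
  | succ n ih =>
    rw [dissipate_succ]
    exact ⟨ih.1.inter_right (hTc _).isClosed, ⟨x, mem_dissipate.2 fun k _ => hx k, hx _⟩,
      hX _ _ ih.1 ih.2 (hTc _) (hTconn _)⟩

theorem isPreconnected_iInter : IsPreconnected (⋂ n, T n) := by
  rw [← iInter_dissipate]
  exact IsPreconnected.iInter_of_directed directed_dissipate
    (fun n => (isConnected_dissipate hX hTc hTconn hx n).1)
    (fun n => (isConnected_dissipate hX hTc hTconn hx n).2.isPreconnected)

end HereditarilyUnicoherent

theorem isNowhereDense_iInter_of_subset_union_thickening {X : Type*} [PseudoMetricSpace X]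
    {A : Set X} (hA : A.Nonempty) (hAnd : IsNowhereDense A) {T L : ℕ → Set X}
    (hTc : ∀ n, IsClosed (T n)) (hL : ∀ n, IsNowhereDense (L n))
    (hTL : ∀ n, T n ⊆ L n ∪ Metric.thickening (1 / (n + 1 : ℝ)) A) :
    IsNowhereDense (⋂ n, T n) := by
  rw [(isClosed_iInter hTc).isNowhereDense_iff, ← not_nonempty_iff_eq_empty]
  intro hint
  obtain ⟨w, hw, hwA⟩ := (interior_eq_empty_iff_dense_compl.1 hAnd).inter_open_nonempty _
    isOpen_interior hint
  obtain ⟨n, hn⟩ := exists_nat_one_div_lt ((Metric.infDist_pos_iff_notMem_closure hA).1 hwA)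
  set W := interior (⋂ n, T n) ∩ {y | 1 / (n + 1 : ℝ) < Metric.infDist y A}
  have hWL : W ⊆ L n := fun y hy =>
    (hTL n (mem_iInter.1 (interior_subset hy.1) n)).resolve_right fun hyA =>
      hy.2.not_gt ((Metric.mem_thickening_iff_infDist_lt hA).1 hyA)
  have hWo : IsOpen W :=
    isOpen_interior.inter (isOpen_lt continuous_const (Metric.continuous_infDist_pt A))
  have hWint : W ⊆ interior (closure (L n)) := interior_maximal (hWL.trans subset_closure) hWo
  rw [hL n] at hWint
  exact hWint ⟨hw, hn⟩

theorem subset_meagerComposant {X : Type} [TopologicalSpace X] {x : X} {L : Set X}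
    (hLc : IsCompact L) (hLconn : IsConnected L) (hLnd : IsNowhereDense L) (hx : x ∈ L) :
    L ⊆ MeagerComposant X x :=
  subset_sUnion_of_mem ⟨hLc, hLconn, hLnd, hx⟩

theorem AmpleIn.exists_subcontinuum_meets {X : Type} [TopologicalSpace X] {K A S U : Set X}
    (hample : AmpleIn K A) (hdense : K ⊆ closure (S ∩ K)) (hA : A.Nonempty) (hU : IsOpen U)
    (hAU : A ⊆ U) :
    ∃ C, IsCompact C ∧ IsPreconnected C ∧ A ⊆ C ∧ C ⊆ U ∧ (C ∩ S).Nonempty := by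
  obtain ⟨a, ha⟩ := hA
  obtain ⟨C, -, hCc, hCp, hCU, hAint⟩ := hample.2 U hU hAU
  have hAC : A ⊆ C := fun y hy =>
    let ⟨_, _, hyV, hVC⟩ := hAint hy
    hVC ⟨hyV, hample.1 hy⟩
  obtain ⟨V, hV, haV, hVC⟩ := hAint ha
  obtain ⟨m, hmV, hmS, hmK⟩ := mem_closure_iff.1 (hdense (hample.1 ha)) V hV haV
  exact ⟨C, hCc, hCp, hAC, hCU, m, hVC ⟨hmV, hmK⟩, hmS⟩

theorem ample_subcontinuum_meets_meagerComposant_general (X : Type) [MetricSpace X]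
    (hX : HereditarilyUnicoherent X) (x : X)
    (K : Set X)
    (hdense : K ⊆ closure (MeagerComposant X x ∩ K))
    (A : Set X) (hAc : IsCompact A) (hAconn : IsConnected A) (hAK : A ⊆ K)
    (hample : AmpleIn K A) :
    (A ∩ MeagerComposant X x).Nonempty := by
  by_cases hint : (interior A).Nonempty
  · obtain ⟨w, hw⟩ := hint
    obtain ⟨z, hzA, hzM, -⟩ :=
      mem_closure_iff.1 (hdense (hAK (interior_subset hw))) _ isOpen_interior hw
    exact ⟨z, interior_subset hzA, hzM⟩
  have hAnd : IsNowhereDense A :=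
    hAc.isClosed.isNowhereDense_iff.2 (not_nonempty_iff_eq_empty.1 hint)
  have hT : ∀ n : ℕ, ∃ T L : Set X, IsCompact T ∧ IsConnected T ∧ x ∈ T ∧ A ⊆ T ∧
      IsNowhereDense L ∧ T ⊆ L ∪ Metric.thickening (1 / (n + 1 : ℝ)) A := by
    intro n
    obtain ⟨C, hCc, hCp, hAC, hCU, m, hmC, L, ⟨hLc, hLconn, hLnd, hxL⟩, hmL⟩ :=
      hample.exists_subcontinuum_meets hdense hAconn.nonempty Metric.isOpen_thickening
        (Metric.self_subset_thickening Nat.one_div_pos_of_nat A)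
    exact ⟨L ∪ C, L, hLc.union hCc,
      ⟨⟨x, Or.inl hxL⟩, hLconn.isPreconnected.union m hmL hmC hCp⟩, Or.inl hxL,
      hAC.trans subset_union_right, hLnd, union_subset_union_right L hCU⟩
  choose T L hTc hTconn hxT hAT hLnd hTL using hT
  have hxI : x ∈ ⋂ n, T n := mem_iInter.2 hxT
  have hIc : IsCompact (⋂ n, T n) := (hTc 0).of_isClosed_subset
    (isClosed_iInter fun n => (hTc n).isClosed) (iInter_subset T 0)
  have hIconn : IsConnected (⋂ n, T n) := ⟨⟨x, hxI⟩, hX.isPreconnected_iInter hTc hTconn hxT⟩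
  have hInd : IsNowhereDense (⋂ n, T n) :=
    isNowhereDense_iInter_of_subset_union_thickening hAconn.nonempty hAnd
      (fun n => (hTc n).isClosed) hLnd hTL
  obtain ⟨a, ha⟩ := hAconn.nonempty
  exact ⟨a, ha, subset_meagerComposant hIc hIconn hInd hxI (mem_iInter.2 fun n => hAT n ha)⟩

/-- In a hereditarily unicoherent continuum, if `M_x ∩ K` is dense in a subcontinuum `K`,
then every ample subcontinuum of `K` intersects `M_x`. -/
theorem ample_subcontinuum_meets_meagerComposant (X : Type) [MetricSpace X] [CompactSpace X] [ConnectedSpace X] [Nonempty X]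
    (hX : HereditarilyUnicoherent X) (x : X)
    (K : Set X) (hKc : IsCompact K) (hKconn : IsConnected K)
    (hdense : K ⊆ closure (MeagerComposant X x ∩ K))
    (A : Set X) (hAc : IsCompact A) (hAconn : IsConnected A) (hAK : A ⊆ K)
    (hample : AmpleIn K A) :
    (A ∩ MeagerComposant X x).Nonempty :=
  ample_subcontinuum_meets_meagerComposant_general X hX x K hdense A hAc hAconn hAK hample
end

section
/- Let X be a hereditarily unicoherent continuum and x ∈ X. If the meager composant M_x contains a dense open subset of X, then M_x = X. -/
/-!
Suppose `z ∉ M_x`. By hereditary unicoherence the intersection `[a, b]` (`continuumHull a b`)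
of all subcontinua containing `a` and `b` is a continuum, nowhere dense when `a, b ∈ M_x`.
For `y ∈ O` the continuum `[z, y]` cannot be nowhere dense (it would put `z` into `M_x`), and
its interior `V` lies in `[z, w]` for every `w ∈ O`, because `[z, y] ⊆ [z, w] ∪ [y, w]` with
`[y, w]` nowhere dense. Pick `w ∈ V ∩ O` and a closed neighbourhood `t` of `w` inside
`O \ {z}`. By boundary bumping the component of `z` in `X \ int t` reaches a point `q` of the
frontier of `t`, so `q ∈ O`, and the closure of that component contains `[z, q] ⊇ V ∋ w`,
although it misses `int t ∋ w`.
-/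

open Set Topology

section NowhereDense
variable {X : Type*} [TopologicalSpace X]

lemma IsNowhereDense.union {s t : Set X} (hs : IsNowhereDense s) (ht : IsNowhereDense t) :
    IsNowhereDense (s ∪ t) := by
  rw [IsNowhereDense, interior_eq_empty_iff_dense_compl] at *
  rw [closure_union, compl_union]
  exact hs.inter_of_isOpen_left ht isClosed_closure.isOpen_compl

lemma IsNowhereDense.interior_subset_of_subset_union {s t u : Set X} (hu : IsNowhereDense u)
    (ht : IsClosed t) (h : s ⊆ t ∪ u) : interior s ⊆ t := by
  have : interior s \ t ⊆ interior (closure u) :=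
    (isOpen_interior.sdiff ht).subset_interior_iff.mpr fun p hp =>
      subset_closure ((h (interior_subset hp.1)).resolve_left hp.2)
  rwa [hu, subset_empty_iff, sdiff_eq_empty] at this

end NowhereDense

theorem isPreconnected_sInter_of_directedOn {X : Type*} [TopologicalSpace X] [T2Space X]
    {S : Set (Set X)} (hS : S.Nonempty) (hdir : DirectedOn (· ⊇ ·) S)
    (hcpt : ∀ K ∈ S, IsCompact K) (hpre : ∀ K ∈ S, IsPreconnected K) :
    IsPreconnected (⋂₀ S) := by
  obtain ⟨K₀, hK₀⟩ := hS
  have hcl : IsClosed (⋂₀ S) := isClosed_sInter fun K hK => (hcpt K hK).isClosed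
  rw [isPreconnected_iff_subset_of_fully_disjoint_closed hcl]
  intro u v hu hv hcover huv
  obtain ⟨U, V, hU, hV, huU, hvV, hUV⟩ := SeparatedNhds.of_isCompact_isCompact
    ((hcpt K₀ hK₀).inter_left hu) ((hcpt K₀ hK₀).inter_left hv)
    (huv.mono inter_subset_left inter_subset_left)
  -- Cantor's intersection theorem puts some member of `S` inside `U ∪ V`.
  obtain ⟨K, hK, hKUV⟩ : ∃ K ∈ S, K ⊆ U ∪ V := by
    by_contra! h
    have : Nonempty S := ⟨⟨K₀, hK₀⟩⟩
    obtain ⟨p, hp⟩ := IsCompact.nonempty_iInter_of_directed_nonempty_isCompact_isClosed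
      (fun K : S => (K : Set X) \ (U ∪ V))
      (fun K₁ K₂ => by
        obtain ⟨K, hK, h₁, h₂⟩ := hdir _ K₁.2 _ K₂.2
        exact ⟨⟨K, hK⟩, sdiff_subset_sdiff_left h₁, sdiff_subset_sdiff_left h₂⟩)
      (fun K => nonempty_of_not_subset (h K K.2))
      (fun K => ((hcpt K K.2).diff (hU.union hV)))
      (fun K => (hcpt K K.2).isClosed.sdiff (hU.union hV))
    rw [mem_iInter] at hp
    have hpS : p ∈ ⋂₀ S := fun K hK => (hp ⟨K, hK⟩).1
    have hpK₀ : p ∈ K₀ := hpS K₀ hK₀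
    exact (hp ⟨K₀, hK₀⟩).2 ((hcover hpS).imp (fun h => huU ⟨h, hpK₀⟩) fun h => hvV ⟨h, hpK₀⟩)
  have hSK : ⋂₀ S ⊆ K := sInter_subset_of_mem hK
  rcases (hpre K hK).subset_or_subset hU hV hUV hKUV with hKU | hKV
  · refine Or.inl fun p hp => (hcover hp).resolve_right fun hpv => ?_
    exact hUV.ne_of_mem (hKU (hSK hp)) (hvV ⟨hpv, hp K₀ hK₀⟩) rfl
  · refine Or.inr fun p hp => (hcover hp).resolve_left fun hpu => ?_
    exact hUV.ne_of_mem (huU ⟨hpu, hp K₀ hK₀⟩) (hKV (hSK hp)) rfl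

section ConnectedComponent
variable {X : Type*} [TopologicalSpace X] [CompactSpace X] [T2Space X]

theorem exists_isClopen_of_connectedComponent_subset {x : X} {U : Set X} (hU : IsOpen U)
    (h : connectedComponent x ⊆ U) : ∃ s, IsClopen s ∧ x ∈ s ∧ s ⊆ U := by
  have hempty : Uᶜ ∩ ⋂ s : {s : Set X // IsClopen s ∧ x ∈ s}, (s : Set X) = ∅ := by
    rwa [← connectedComponent_eq_iInter_isClopen, inter_comm, ← sdiff_eq, sdiff_eq_empty]
  obtain ⟨t, ht⟩ := hU.isClosed_compl.isCompact.elim_finite_subfamily_closed _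
    (fun s => s.2.1.1) hempty
  refine ⟨⋂ s ∈ t, (s : Set X), isClopen_biInter_finset fun s _ => s.2.1,
    mem_iInter₂.2 fun s _ => s.2.2, ?_⟩
  rwa [inter_comm, ← sdiff_eq, sdiff_eq_empty] at ht

/-- Boundary bumping. -/
theorem connectedComponentIn_inter_frontier_nonempty [PreconnectedSpace X] {A : Set X}
    (hA : IsClosed A) (hA_ne : A ≠ univ) {z : X} (hz : z ∈ A) :
    (connectedComponentIn A z ∩ frontier A).Nonempty := by
  by_contra h
  have : CompactSpace A := isCompact_iff_compactSpace.mp hA.isCompact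
  have hsub : connectedComponent (⟨z, hz⟩ : A) ⊆ (↑) ⁻¹' interior A := fun a ha => by
    change (a : X) ∈ interior A
    rw [← self_sdiff_frontier]
    refine ⟨a.2, fun haf => h ⟨a, ?_, haf⟩⟩
    rw [connectedComponentIn_eq_image hz]
    exact mem_image_of_mem _ ha
  obtain ⟨s, hs, hzs, hsA⟩ := exists_isClopen_of_connectedComponent_subset
    (isOpen_interior.preimage continuous_subtype_val) hsub
  obtain ⟨W, hW, rfl⟩ := isOpen_induced_iff.mp hs.2
  have himage : (↑) '' ((↑) ⁻¹' W : Set A) = interior A ∩ W := by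
    ext p
    refine ⟨?_, fun hp => ⟨⟨p, interior_subset hp.1⟩, hp.2, rfl⟩⟩
    rintro ⟨a, ha, rfl⟩
    exact ⟨hsA ha, ha⟩
  have hclopen : IsClopen (interior A ∩ W) :=
    ⟨himage ▸ hA.isClosedEmbedding_subtypeVal.isClosedMap _ hs.1, isOpen_interior.inter hW⟩
  have huniv : interior A ∩ W = univ := hclopen.eq_univ ⟨z, hsA hzs, hzs⟩
  exact hA_ne (eq_univ_of_univ_subset (huniv ▸ inter_subset_left.trans interior_subset))

end ConnectedComponent

section ContinuumHull
variable {X : Type*} [TopologicalSpace X]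

def continuumHull (a b : X) : Set X :=
  ⋂₀ {K | IsCompact K ∧ IsPreconnected K ∧ a ∈ K ∧ b ∈ K}

lemma continuumHull_subset {a b : X} {K : Set X} (hK : IsCompact K) (hK' : IsPreconnected K)
    (ha : a ∈ K) (hb : b ∈ K) : continuumHull a b ⊆ K :=
  sInter_subset_of_mem ⟨hK, hK', ha, hb⟩

lemma left_mem_continuumHull (a b : X) : a ∈ continuumHull a b :=
  fun _ hK => hK.2.2.1

lemma right_mem_continuumHull (a b : X) : b ∈ continuumHull a b :=
  fun _ hK => hK.2.2.2

variable [T2Space X]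

lemma isClosed_continuumHull (a b : X) : IsClosed (continuumHull a b) :=
  isClosed_sInter fun _ hK => hK.1.isClosed

variable [CompactSpace X]

lemma isCompact_continuumHull (a b : X) : IsCompact (continuumHull a b) :=
  (isClosed_continuumHull a b).isCompact

end ContinuumHull

section MeagerComposant
variable {X : Type} [TopologicalSpace X] {x : X}

lemma mem_meagerComposant_of_mem_subcontinuum {y q : X} {L : Set X} (hLc : IsCompact L)
    (hLp : IsPreconnected L) (hLn : IsNowhereDense L) (hy : y ∈ L) (hq : q ∈ L)
    (hqM : q ∈ MeagerComposant X x) : y ∈ MeagerComposant X x := by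
  obtain ⟨L', ⟨hc, hconn, hn, hx⟩, hqL'⟩ := hqM
  exact ⟨L ∪ L', ⟨hLc.union hc, ⟨⟨x, Or.inr hx⟩, hLp.union q hq hqL' hconn.isPreconnected⟩,
    hLn.union hn, Or.inr hx⟩, Or.inl hy⟩

lemma isNowhereDense_continuumHull {a b : X} (ha : a ∈ MeagerComposant X x)
    (hb : b ∈ MeagerComposant X x) : IsNowhereDense (continuumHull a b) := by
  obtain ⟨La, ⟨hca, hpa, hna, hxa⟩, haa⟩ := ha
  obtain ⟨Lb, ⟨hcb, hpb, hnb, hxb⟩, hbb⟩ := hb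
  exact (hna.union hnb).mono (continuumHull_subset (hca.union hcb)
    (hpa.isPreconnected.union x hxa hxb hpb.isPreconnected) (Or.inl haa) (Or.inr hbb))

variable [T2Space X] [CompactSpace X] [PreconnectedSpace X]

lemma HereditarilyUnicoherent.isPreconnected_continuumHull (hX : HereditarilyUnicoherent X)
    (a b : X) : IsPreconnected (continuumHull a b) := by
  refine isPreconnected_sInter_of_directedOn
    ⟨univ, isCompact_univ, isPreconnected_univ, mem_univ a, mem_univ b⟩ ?_ (fun K hK => hK.1)
    fun K hK => hK.2.1
  rintro K₁ ⟨hc₁, hp₁, ha₁, hb₁⟩ K₂ ⟨hc₂, hp₂, ha₂, hb₂⟩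
  exact ⟨K₁ ∩ K₂, ⟨hc₁.inter_right hc₂.isClosed,
    hX K₁ K₂ hc₁ ⟨⟨a, ha₁⟩, hp₁⟩ hc₂ ⟨⟨a, ha₂⟩, hp₂⟩, ⟨ha₁, ha₂⟩, ⟨hb₁, hb₂⟩⟩,
    inter_subset_left, inter_subset_right⟩

lemma HereditarilyUnicoherent.interior_continuumHull_nonempty (hX : HereditarilyUnicoherent X)
    {y z : X} (hz : z ∉ MeagerComposant X x) (hy : y ∈ MeagerComposant X x) :
    (interior (continuumHull z y)).Nonempty := by
  rw [nonempty_iff_ne_empty, Ne, ← (isClosed_continuumHull z y).isNowhereDense_iff]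
  exact fun hn => hz (mem_meagerComposant_of_mem_subcontinuum (isCompact_continuumHull z y)
    (hX.isPreconnected_continuumHull z y) hn (left_mem_continuumHull z y)
    (right_mem_continuumHull z y) hy)

lemma HereditarilyUnicoherent.interior_continuumHull_subset (hX : HereditarilyUnicoherent X)
    {y w : X} (hy : y ∈ MeagerComposant X x) (hw : w ∈ MeagerComposant X x) (z : X) :
    interior (continuumHull z y) ⊆ continuumHull z w :=
  (isNowhereDense_continuumHull hy hw).interior_subset_of_subset_union
    (isClosed_continuumHull z w)
    (continuumHull_subset ((isCompact_continuumHull z w).union (isCompact_continuumHull y w))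
      ((hX.isPreconnected_continuumHull z w).union w (right_mem_continuumHull z w)
        (right_mem_continuumHull y w) (hX.isPreconnected_continuumHull y w))
      (Or.inl (left_mem_continuumHull z w)) (Or.inr (left_mem_continuumHull y w)))

end MeagerComposant

theorem meagerComposant_eq_univ_of_dense_open_general (X : Type) [MetricSpace X] [CompactSpace X] [ConnectedSpace X]
    (hX : HereditarilyUnicoherent X) (x : X) (O : Set X)
    (hO : IsOpen O) (hOd : Dense O) (hOM : O ⊆ MeagerComposant X x) :
    MeagerComposant X x = Set.univ := by
  by_contra hne
  obtain ⟨z, hz⟩ := (ne_univ_iff_exists_notMem _).1 hne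
  obtain ⟨y, hy⟩ := hOd.nonempty
  obtain ⟨w, hwV, hwO⟩ := hOd.inter_open_nonempty _ isOpen_interior
    (hX.interior_continuumHull_nonempty hz (hOM hy))
  have hwz : w ≠ z := fun h => hz (hOM (h ▸ hwO))
  obtain ⟨t, ht, htc, htO⟩ :=
    exists_mem_nhds_isClosed_subset ((hO.sdiff isClosed_singleton).mem_nhds ⟨hwO, hwz⟩)
  have hwt : w ∈ interior t := mem_interior_iff_mem_nhds.2 ht
  have hzt : z ∈ (interior t)ᶜ := fun h => (htO (interior_subset h)).2 rfl
  obtain ⟨q, hq_comp, hqt⟩ := connectedComponentIn_inter_frontier_nonempty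
    isOpen_interior.isClosed_compl ((ne_univ_iff_exists_notMem _).2 ⟨w, not_not.2 hwt⟩) hzt
  rw [frontier_compl] at hqt
  have hqO : q ∈ O := (htO (closure_minimal interior_subset htc (frontier_subset_closure hqt))).1
  set Q := closure (connectedComponentIn (interior t)ᶜ z)
  have hwQ : w ∈ Q := continuumHull_subset isClosed_closure.isCompact
    isPreconnected_connectedComponentIn.closure (subset_closure (mem_connectedComponentIn hzt))
    (subset_closure hq_comp) (hX.interior_continuumHull_subset (hOM hy) (hOM hqO) z hwV)
  exact closure_minimal (connectedComponentIn_subset _ _) isOpen_interior.isClosed_compl hwQ hwt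

/-- If a meager composant of a hereditarily unicoherent continuum contains a dense open
subset of `X`, then it is all of `X`. -/
theorem meagerComposant_eq_univ_of_dense_open (X : Type) [MetricSpace X] [CompactSpace X] [ConnectedSpace X] [Nonempty X]
    (hX : HereditarilyUnicoherent X) (x : X) (O : Set X)
    (hO : IsOpen O) (hOd : Dense O) (hOM : O ⊆ MeagerComposant X x) :
    MeagerComposant X x = Set.univ :=
  meagerComposant_eq_univ_of_dense_open_general X hX x O hO hOd hOM
end

section
/- Let X be a hereditarily unicoherent continuum and x ∈ X. If the meager composant M_x is open in X, then M_x = X. In particular, no hereditarily unicoherent continuum has a proper open meager composant. -/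
/-!
Suppose `M = M_x` is open but not closed, and pick `q ∈ closure M \ M`. In a hereditarily
unicoherent continuum any two points `a, b` lie in a smallest subcontinuum `[a, b]`. The
continuum `[x, q] ⊆ closure M` has nonempty interior `V` (otherwise it would put `q` into `M`),
and for `w ∈ M` we have `[x, q] ⊆ [x, w] ∪ [w, q]` with `[x, w]` nowhere dense, so
`V ⊆ [w, q]`. Take `w ∈ V ∩ M` and an open `U ∋ w` with `closure U ⊆ M`. By boundary bumping,
the component of `q` in `[w, q] \ U` reaches a point `s ∈ closure U ⊆ M`; it then contains
`[s, q] ⊇ V ∋ w`, although it misses `U ∋ w`.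
-/

open Set Topology

section General

variable {X : Type*} [TopologicalSpace X]

theorem IsOpen.subset_of_subset_union_isNowhereDense {s A B : Set X} (hs : IsOpen s)
    (hsAB : s ⊆ A ∪ B) (hA : IsNowhereDense A) (hB : IsClosed B) : s ⊆ B := by
  have hsA : s \ B ⊆ interior (closure A) :=
    (hs.sdiff hB).subset_interior_iff.2 fun z hz =>
      subset_closure ((hsAB hz.1).resolve_right hz.2)
  rw [hA] at hsA
  exact fun z hz => by_contra fun hzB => hsA ⟨hz, hzB⟩

theorem IsPreconnected.sInter_of_directedOn [T2Space X] {S : Set (Set X)}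
    (hS : DirectedOn (· ⊇ ·) S) (hne : S.Nonempty) (hcpt : ∀ K ∈ S, IsCompact K)
    (hpc : ∀ K ∈ S, IsPreconnected K) : IsPreconnected (⋂₀ S) := by
  obtain ⟨K₀, hK₀⟩ := hne
  have hT : IsCompact (⋂₀ S) := (hcpt K₀ hK₀).of_isClosed_subset
    (isClosed_sInter fun K hK => (hcpt K hK).isClosed) (sInter_subset_of_mem hK₀)
  rw [isPreconnected_iff_subset_of_fully_disjoint_closed hT.isClosed]
  intro A B hA hB hAB hdisj
  obtain ⟨U, V, hU, hV, hAU, hBV, hUV⟩ := SeparatedNhds.of_isCompact_isCompact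
    (hT.inter_right hA) (hT.inter_right hB)
    (hdisj.mono inter_subset_right inter_subset_right)
  have hTUV : ⋂₀ S ⊆ U ∪ V := fun z hz =>
    (hAB hz).imp (fun h => hAU ⟨hz, h⟩) (fun h => hBV ⟨hz, h⟩)
  have : Nonempty S := ⟨⟨K₀, hK₀⟩⟩
  obtain ⟨⟨K, hK⟩, hKUV⟩ := exists_subset_nhds_of_isCompact hS.directed_val
    (fun K => hcpt K K.2) fun z hz =>
      (hU.union hV).mem_nhds (hTUV (by rwa [sInter_eq_iInter]))
  have hTK : ⋂₀ S ⊆ K := sInter_subset_of_mem hK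
  rcases (hpc K hK).subset_or_subset hU hV hUV hKUV with hKU | hKV
  · exact Or.inl fun z hz => (hAB hz).resolve_right fun hzB =>
      disjoint_left.1 hUV (hKU (hTK hz)) (hBV ⟨hz, hzB⟩)
  · exact Or.inr fun z hz => (hAB hz).resolve_left fun hzA =>
      disjoint_left.1 hUV (hAU ⟨hz, hzA⟩) (hKV (hTK hz))

theorem exists_isClopen_mem_disjoint_of_disjoint_connectedComponent [CompactSpace X]
    [T2Space X] {x : X} {K : Set X} (hK : IsClosed K) (h : Disjoint (connectedComponent x) K) :
    ∃ E, IsClopen E ∧ x ∈ E ∧ Disjoint E K := by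
  rw [connectedComponent_eq_iInter_isClopen, disjoint_iff_inter_eq_empty, inter_comm] at h
  obtain ⟨u, hu⟩ := hK.isCompact.elim_finite_subfamily_closed _ (fun E => E.2.1.isClosed) h
  refine ⟨⋂ E ∈ u, E.1, isClopen_biInter_finset fun E _ => E.2.1,
    mem_iInter₂.2 fun E _ => E.2.2, ?_⟩
  rw [disjoint_iff_inter_eq_empty, inter_comm, hu]

theorem IsPreconnected.boundary_bumping [T2Space X] {Z U : Set X} (hZ : IsPreconnected Z)
    (hZc : IsCompact Z) (hU : IsOpen U) (hZU : (Z ∩ U).Nonempty) {q : X} (hqZ : q ∈ Z)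
    (hqU : q ∉ U) :
    ∃ C, IsCompact C ∧ IsPreconnected C ∧ q ∈ C ∧ C ⊆ Z \ U ∧
      (C ∩ closure U).Nonempty := by
  have : CompactSpace ↥(Z \ U) := isCompact_iff_compactSpace.1 (hZc.diff hU)
  set qF : ↥(Z \ U) := ⟨q, hqZ, hqU⟩
  refine ⟨Subtype.val '' connectedComponent qF,
    isClosed_connectedComponent.isCompact.image continuous_subtype_val,
    isPreconnected_connectedComponent.image _ continuous_subtype_val.continuousOn,
    ⟨qF, mem_connectedComponent, rfl⟩, image_subset_iff.2 fun z _ => z.2, ?_⟩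
  by_contra hCU
  obtain ⟨E, hE, hqE, hEU⟩ := exists_isClopen_mem_disjoint_of_disjoint_connectedComponent
    (isClosed_closure.preimage continuous_subtype_val)
    (disjoint_left.2 fun z hz hzU => hCU ⟨z, ⟨z, hz, rfl⟩, hzU⟩)
  obtain ⟨O, hO, hOE⟩ := isOpen_induced_iff.1 hE.isOpen
  -- `E` is clopen in `Z` as well: closed since compact, and equal to `Z ∩ O \ closure U`.
  have hEZ : ∀ z ∈ Z, z ∈ O → z ∉ closure U → z ∈ Subtype.val '' E :=
    fun z hzZ hzO hzU => ⟨⟨z, hzZ, fun h => hzU (subset_closure h)⟩, hOE ▸ hzO, rfl⟩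
  have hEO : ∀ e ∈ E, (e : X) ∈ O ∧ (e : X) ∉ closure U := fun e he =>
    ⟨(hOE.symm ▸ he : e ∈ Subtype.val ⁻¹' O), disjoint_left.1 hEU he⟩
  obtain ⟨z, hzZ, hzO, hzE⟩ := hZ (O ∩ (closure U)ᶜ) (Subtype.val '' E)ᶜ
    (hO.inter isClosed_closure.isOpen_compl)
    (hE.isClosed.isCompact.image continuous_subtype_val).isClosed.isOpen_compl
    (fun z _ => (em (z ∈ Subtype.val '' E)).imp (fun ⟨e, he, hez⟩ => hez ▸ hEO e he) id)
    ⟨q, hqZ, hEO qF hqE⟩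
    (hZU.imp fun z hz => ⟨hz.1, by rintro ⟨e, -, rfl⟩; exact e.2.2 hz.2⟩)
  exact hzE (hEZ z hzZ hzO.1 hzO.2)

end General

section IrreducibleContinuum

variable {X : Type*} [TopologicalSpace X]

/-- In a hereditarily unicoherent continuum this is the smallest subcontinuum containing
`a` and `b`, usually written `[a, b]`. -/
def irreducibleContinuum (a b : X) : Set X :=
  ⋂₀ {K | IsCompact K ∧ IsPreconnected K ∧ a ∈ K ∧ b ∈ K}

theorem irreducibleContinuum_subset {a b : X} {K : Set X} (hK : IsCompact K)
    (hK' : IsPreconnected K) (ha : a ∈ K) (hb : b ∈ K) : irreducibleContinuum a b ⊆ K :=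
  sInter_subset_of_mem ⟨hK, hK', ha, hb⟩

theorem left_mem_irreducibleContinuum (a b : X) : a ∈ irreducibleContinuum a b :=
  mem_sInter.2 fun _ hK => hK.2.2.1

theorem right_mem_irreducibleContinuum (a b : X) : b ∈ irreducibleContinuum a b :=
  mem_sInter.2 fun _ hK => hK.2.2.2

theorem isClosed_irreducibleContinuum [T2Space X] (a b : X) :
    IsClosed (irreducibleContinuum a b) :=
  isClosed_sInter fun _ hK => hK.1.isClosed

theorem isCompact_irreducibleContinuum [CompactSpace X] [T2Space X] (a b : X) :
    IsCompact (irreducibleContinuum a b) :=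
  (isClosed_irreducibleContinuum a b).isCompact

end IrreducibleContinuum

namespace HereditarilyUnicoherent

variable {X : Type} [TopologicalSpace X] [CompactSpace X] [T2Space X]

theorem isPreconnected_irreducibleContinuum [PreconnectedSpace X]
    (hX : HereditarilyUnicoherent X) (a b : X) : IsPreconnected (irreducibleContinuum a b) := by
  refine IsPreconnected.sInter_of_directedOn ?_
    ⟨univ, isCompact_univ, isPreconnected_univ, mem_univ a, mem_univ b⟩
    (fun K hK => hK.1) (fun K hK => hK.2.1)
  rintro K₁ ⟨hK₁, hK₁', ha₁, hb₁⟩ K₂ ⟨hK₂, hK₂', ha₂, hb₂⟩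
  exact ⟨K₁ ∩ K₂,
    ⟨hK₁.inter hK₂, hX K₁ K₂ hK₁ ⟨⟨a, ha₁⟩, hK₁'⟩ hK₂ ⟨⟨a, ha₂⟩, hK₂'⟩, ⟨ha₁, ha₂⟩, ⟨hb₁, hb₂⟩⟩,
    inter_subset_left, inter_subset_right⟩

theorem irreducibleContinuum_subset_union [PreconnectedSpace X]
    (hX : HereditarilyUnicoherent X) (a b c : X) :
    irreducibleContinuum a c ⊆ irreducibleContinuum a b ∪ irreducibleContinuum b c :=
  irreducibleContinuum_subset
    ((isCompact_irreducibleContinuum a b).union (isCompact_irreducibleContinuum b c))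
    ((hX.isPreconnected_irreducibleContinuum a b).union b
      (right_mem_irreducibleContinuum a b) (left_mem_irreducibleContinuum b c)
      (hX.isPreconnected_irreducibleContinuum b c))
    (Or.inl (left_mem_irreducibleContinuum a b)) (Or.inr (right_mem_irreducibleContinuum b c))

end HereditarilyUnicoherent

section MeagerComposant

variable {X : Type} [TopologicalSpace X]

theorem mem_meagerComposant_self [T1Space X] [ConnectedSpace X] [Nontrivial X] (x : X) :
    x ∈ MeagerComposant X x :=
  ⟨{x}, ⟨isCompact_singleton, isConnected_singleton,
    isClosed_singleton.isNowhereDense_iff.2 (interior_singleton x), rfl⟩, rfl⟩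

theorem isPreconnected_meagerComposant (x : X) : IsPreconnected (MeagerComposant X x) :=
  isPreconnected_sUnion x _ (fun _ hL => hL.2.2.2) fun _ hL => hL.2.1.isPreconnected

theorem isNowhereDense_irreducibleContinuum_of_mem {x w : X} (hw : w ∈ MeagerComposant X x) :
    IsNowhereDense (irreducibleContinuum x w) := by
  obtain ⟨L, ⟨hL, hL', hLnd, hxL⟩, hwL⟩ := hw
  exact hLnd.mono (irreducibleContinuum_subset hL hL'.isPreconnected hxL hwL)

variable [CompactSpace X] [T2Space X]

theorem HereditarilyUnicoherent.interior_irreducibleContinuum_nonempty [PreconnectedSpace X]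
    (hX : HereditarilyUnicoherent X) {x q : X} (hq : q ∉ MeagerComposant X x) :
    (interior (irreducibleContinuum x q)).Nonempty := by
  rw [nonempty_iff_ne_empty, Ne, ← (isClosed_irreducibleContinuum x q).isNowhereDense_iff]
  exact fun hnd => hq ⟨irreducibleContinuum x q, ⟨isCompact_irreducibleContinuum x q,
    ⟨⟨x, left_mem_irreducibleContinuum x q⟩, hX.isPreconnected_irreducibleContinuum x q⟩,
    hnd, left_mem_irreducibleContinuum x q⟩, right_mem_irreducibleContinuum x q⟩

theorem HereditarilyUnicoherent.interior_irreducibleContinuum_subset [PreconnectedSpace X]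
    (hX : HereditarilyUnicoherent X) {x w : X} (hw : w ∈ MeagerComposant X x) (q : X) :
    interior (irreducibleContinuum x q) ⊆ irreducibleContinuum w q :=
  isOpen_interior.subset_of_subset_union_isNowhereDense
    (interior_subset.trans (hX.irreducibleContinuum_subset_union x w q))
    (isNowhereDense_irreducibleContinuum_of_mem hw) (isClosed_irreducibleContinuum w q)

end MeagerComposant

theorem meagerComposant_eq_univ_of_isOpen_general (X : Type) [MetricSpace X] [CompactSpace X] [ConnectedSpace X] [Nontrivial X]
    (hX : HereditarilyUnicoherent X) (x : X)
    (hopen : IsOpen (MeagerComposant X x)) :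
    MeagerComposant X x = Set.univ := by
  set M := MeagerComposant X x
  have hxM : x ∈ M := mem_meagerComposant_self x
  refine IsClopen.eq_univ ⟨isClosed_of_closure_subset fun q hqcl => by_contra fun hqM => ?_,
    hopen⟩ ⟨x, hxM⟩
  have hxq : irreducibleContinuum x q ⊆ closure M :=
    irreducibleContinuum_subset isClosed_closure.isCompact
      (isPreconnected_meagerComposant x).closure (subset_closure hxM) hqcl
  obtain ⟨w, hwV, hwM⟩ : (interior (irreducibleContinuum x q) ∩ M).Nonempty := by
    rw [inter_comm, ← closure_inter_open_nonempty_iff isOpen_interior,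
      inter_eq_right.2 (interior_subset.trans hxq)]
    exact hX.interior_irreducibleContinuum_nonempty hqM
  obtain ⟨U, ⟨hwU, hU⟩, hUM⟩ := (hasBasis_opens_closure w).mem_iff.1 (hopen.mem_nhds hwM)
  obtain ⟨C, hC, hC', hqC, hCwq, s, hsC, hsU⟩ :=
    (hX.isPreconnected_irreducibleContinuum w q).boundary_bumping
      (isCompact_irreducibleContinuum w q) hU ⟨w, left_mem_irreducibleContinuum w q, hwU⟩
      (right_mem_irreducibleContinuum w q) fun h => hqM (hUM (subset_closure h))
  have hwC : w ∈ C := irreducibleContinuum_subset hC hC' hsC hqC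
    (hX.interior_irreducibleContinuum_subset (hUM hsU) q hwV)
  exact (hCwq hwC).2 hwU

/-- No proper open meager composant: in a (nondegenerate) hereditarily unicoherent
continuum, an open meager composant must be the whole space. -/
theorem meagerComposant_eq_univ_of_isOpen (X : Type) [MetricSpace X] [CompactSpace X] [ConnectedSpace X] [Nonempty X] [Nontrivial X]
    (hX : HereditarilyUnicoherent X) (x : X)
    (hopen : IsOpen (MeagerComposant X x)) :
    MeagerComposant X x = Set.univ :=
  meagerComposant_eq_univ_of_isOpen_general X hX x hopen
end
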